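/- arXiv:math/0112069 — 2 statements merged into one kernel-verified Lean document; each statement's English description precedes it below -/
import Mathlib

section
/- Let M be a family of Meshalkin sequences of length p ≥ 2 in PG(n-1,q) such that each M_k for k < p is an antichain. Then |M| ≤ [n; ⌈n/p⌉,…,⌈n/p⌉,⌊n/p⌋,…,⌊n/p⌋]_q · q^{s_2(⌈n/p⌉,…,⌊n/p⌋)}, i.e., |M| is at most the maximum of [n;α]_q q^{s_2(α)} over compositions α of n into p nonnegative parts, which is attained when all parts are ⌈n/p⌉ or ⌊n/p⌋. -/
open Finset

/-- The `q`-factorial `n!_q = (q^n - 1)(q^(n-1) - 1) ⋯ (q - 1)`. -/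
def qFact (q n : ℕ) : ℕ := ∏ i ∈ Finset.range n, (q ^ (i + 1) - 1)

/-- The Gaussian multinomial coefficient `[n; α_1, …, α_p]_q = n!_q / (α_1!_q ⋯ α_p!_q)`. -/
noncomputable def gaussMultinomial (q n : ℕ) {p : ℕ} (α : Fin p → ℕ) : ℚ :=
  (qFact q n : ℚ) / ∏ i, (qFact q (α i) : ℚ)

/-- The second elementary symmetric function `s_2(α) = ∑_{i<j} α_i α_j`. -/
def s2 {p : ℕ} (α : Fin p → ℕ) : ℕ :=
  ∑ i, ∑ j ∈ Finset.univ.filter (fun j : Fin p => i < j), α i * α j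

set_option linter.unusedSectionVars false

namespace MeshAux

/-- number of spanning `d`-tuples in a `d`-dim space over `F_q`. -/
def gfun (q d : ℕ) : ℕ := ∏ i ∈ Finset.range d, (q ^ d - q ^ i)

lemma qFact_pos {q : ℕ} (hq : 2 ≤ q) (n : ℕ) : 0 < qFact q n := by
  apply Finset.prod_pos
  intro i _
  have : 2 ^ (i+1) ≤ q ^ (i+1) := Nat.pow_le_pow_left hq _
  have h2 : (2:ℕ) ^ 1 ≤ 2 ^ (i+1) := Nat.pow_le_pow_right (by omega) (by omega)
  simp at h2
  omega

lemma gfun_eq (q d : ℕ) : gfun q d = q ^ (∑ i ∈ range d, i) * qFact q d := by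
  unfold gfun qFact
  have h1 : ∀ i ∈ range d, q ^ d - q ^ i = q ^ i * (q ^ (d - i) - 1) := by
    intro i hi
    rw [Nat.mul_sub, mul_one, ← pow_add]
    have : i + (d - i) = d := by simp only [mem_range] at hi; omega
    rw [this]
  rw [Finset.prod_congr rfl h1, Finset.prod_mul_distrib, Finset.prod_pow_eq_pow_sum]
  congr 1
  rw [← Finset.prod_range_reflect (fun i => q ^ (i+1) - 1) d]
  apply Finset.prod_congr rfl
  intro i hi
  simp only [mem_range] at hi
  have : d - 1 - i + 1 = d - i := by omega
  rw [this]

lemma gfun_pos {q : ℕ} (hq : 2 ≤ q) (d : ℕ) : 0 < gfun q d := by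
  rw [gfun_eq]
  exact Nat.mul_pos (Nat.pow_pos (by omega)) (qFact_pos hq d)

lemma gfun_succ (q d : ℕ) : gfun q (d+1) = gfun q d * (q ^ d * (q ^ (d+1) - 1)) := by
  rw [gfun_eq, gfun_eq, qFact, qFact, Finset.prod_range_succ, Finset.sum_range_succ, pow_add]
  ring

lemma two_e2_add (d : ℕ) : 2 * (∑ i ∈ range d, i) + d = d ^ 2 := by
  induction d with
  | zero => simp
  | succ d ih =>
    rw [Finset.sum_range_succ]
    have : (d+1)^2 = d^2 + 2*d + 1 := by ring
    omega

lemma sq_sum {p : ℕ} (α : Fin p → ℕ) :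
    (∑ i, α i) ^ 2 = 2 * s2 α + ∑ i, (α i) ^ 2 := by
  have h0 : (∑ i, α i) ^ 2 = ∑ i, ∑ j, α i * α j := by
    rw [sq, Finset.sum_mul_sum]
  have hsplit : ∀ i : Fin p, ∑ j, α i * α j =
      (∑ j, if i < j then α i * α j else 0) +
      (∑ j, if j < i then α i * α j else 0) + α i ^ 2 := by
    intro i
    have : ∀ j : Fin p, α i * α j =
        (if i < j then α i * α j else 0) + (if j < i then α i * α j else 0) +
        (if j = i then α i * α j else 0) := by
      intro j
      rcases lt_trichotomy i j with h | h | h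
      · simp [h, not_lt_of_gt h, (ne_of_gt h : j ≠ i)]
      · simp [h, lt_irrefl]
      · simp [h, not_lt_of_gt h, (ne_of_lt h).symm, ne_of_lt h]
    rw [Finset.sum_congr rfl (fun j _ => this j), Finset.sum_add_distrib,
      Finset.sum_add_distrib, Finset.sum_ite_eq' (Finset.univ) i (fun j => α i * α j)]
    simp [sq]
  have hswap : (∑ i, ∑ j, if (j:Fin p) < i then α i * α j else 0) = s2 α := by
    rw [Finset.sum_comm]
    unfold s2
    apply Finset.sum_congr rfl
    intro j _
    rw [Finset.sum_filter]
    apply Finset.sum_congr rfl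
    intro i _
    by_cases h : j < i <;> simp [h, mul_comm]
  have hlt : (∑ i, ∑ j, if (i:Fin p) < j then α i * α j else 0) = s2 α := by
    unfold s2
    apply Finset.sum_congr rfl
    intro i _
    rw [Finset.sum_filter]
  rw [h0, Finset.sum_congr rfl (fun i _ => hsplit i), Finset.sum_add_distrib,
    Finset.sum_add_distrib, hswap, hlt]
  ring

lemma s2_exp {p n : ℕ} (α : Fin p → ℕ) (hs : ∑ i, α i = n) :
    s2 α + ∑ i, (∑ j ∈ range (α i), j) = ∑ i ∈ range n, i := by
  have key : ∀ m : ℕ, 2 * (∑ i ∈ range m, i) + m = m ^ 2 := by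
    intro m
    induction m with
    | zero => simp
    | succ d ih =>
      rw [Finset.sum_range_succ]
      have : (d+1)^2 = d^2 + 2*d + 1 := by ring
      omega
  have h1 : 2 * (s2 α + ∑ i, (∑ j ∈ range (α i), j)) + n
      = 2 * (∑ i ∈ range n, i) + n := by
    have h2 : 2 * (∑ i, (∑ j ∈ range (α i), j)) + n
        = ∑ i, (α i) ^ 2 := by
      rw [Finset.mul_sum, ← hs, ← Finset.sum_add_distrib]
      exact Finset.sum_congr rfl (fun i _ => key (α i))
    have h3 := sq_sum α
    rw [hs] at h3
    rw [key n]
    omega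
  omega

lemma ffun_mono {q : ℕ} (hq : 2 ≤ q) {a b : ℕ} (h : a ≤ b) :
    q ^ a * (q ^ (a+1) - 1) ≤ q ^ b * (q ^ (b+1) - 1) :=
  Nat.mul_le_mul (Nat.pow_le_pow_right (by omega) h)
    (Nat.sub_le_sub_right (Nat.pow_le_pow_right (by omega) (by omega)) 1)

lemma gswap {q : ℕ} (hq : 2 ≤ q) {a b : ℕ} (h : b + 2 ≤ a) :
    gfun q (a-1) * gfun q (b+1) ≤ gfun q a * gfun q b := by
  obtain ⟨c, rfl⟩ : ∃ c, a = c + 1 := ⟨a - 1, by omega⟩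
  simp only [Nat.add_sub_cancel]
  rw [gfun_succ q b, gfun_succ q c]
  calc gfun q c * (gfun q b * (q ^ b * (q ^ (b+1) - 1)))
      ≤ gfun q c * (gfun q b * (q ^ c * (q ^ (c+1) - 1))) := by
        exact Nat.mul_le_mul_left _ (Nat.mul_le_mul_left _ (ffun_mono hq (by omega)))
    _ = gfun q c * (q ^ c * (q ^ (c+1) - 1)) * gfun q b := by ring

/-- generic two-point update identity for `Finset.prod`. -/
lemma prod_update2 {p : ℕ} (f : ℕ → ℕ) (α : Fin p → ℕ) {i j : Fin p} (hij : j ≠ i)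
    (a b : ℕ) :
    (∏ k, f (Function.update (Function.update α i a) j b k)) * (f (α i) * f (α j))
      = (∏ k, f (α k)) * (f a * f b) := by
  classical
  have h1 : (fun k => f (Function.update (Function.update α i a) j b k))
      = Function.update (Function.update (f ∘ α) i (f a)) j (f b) := by
    rw [← Function.comp_update, ← Function.comp_update]
    rfl
  have hi : i ∈ Finset.univ \ {j} := by simp [hij.symm]
  have e1 : (∏ k, f (α k)) = (∏ k ∈ (Finset.univ \ {j}) \ {i}, f (α k)) * f (α i) * f (α j) := by
    rw [Finset.prod_eq_prod_diff_singleton_mul (Finset.mem_univ j) (fun k => f (α k)),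
      Finset.prod_eq_prod_diff_singleton_mul hi (fun k => f (α k))]
  rw [h1, Finset.prod_update_of_mem (Finset.mem_univ j), Finset.prod_update_of_mem hi, e1]
  simp only [Function.comp_apply]
  ring

lemma sum_update2 {p : ℕ} (f : ℕ → ℕ) (α : Fin p → ℕ) {i j : Fin p} (hij : j ≠ i)
    (a b : ℕ) :
    (∑ k, f (Function.update (Function.update α i a) j b k)) + (f (α i) + f (α j))
      = (∑ k, f (α k)) + (f a + f b) := by
  classical
  have h1 : (fun k => f (Function.update (Function.update α i a) j b k))
      = Function.update (Function.update (f ∘ α) i (f a)) j (f b) := by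
    rw [← Function.comp_update, ← Function.comp_update]
    rfl
  have hi : i ∈ Finset.univ \ {j} := by simp [hij.symm]
  have e1 : (∑ k, f (α k)) = (∑ k ∈ (Finset.univ \ {j}) \ {i}, f (α k)) + f (α i) + f (α j) := by
    rw [Finset.sum_eq_sum_sdiff_singleton_add (Finset.mem_univ j) (fun k => f (α k)),
      Finset.sum_eq_sum_sdiff_singleton_add hi (fun k => f (α k))]
  rw [h1, Finset.sum_update_of_mem (Finset.mem_univ j), Finset.sum_update_of_mem hi, e1]
  simp only [Function.comp_apply]
  ring

lemma card_filter_lt {p t : ℕ} (ht : t ≤ p) :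
    (Finset.univ.filter (fun k : Fin p => (k:ℕ) < t)).card = t := by
  rcases eq_or_lt_of_le ht with heq | hlt
  · have h1 : (Finset.univ.filter (fun k : Fin p => (k:ℕ) < t)) = Finset.univ := by
      apply Finset.filter_true_of_mem
      intro k _
      have := k.isLt
      omega
    rw [h1, Finset.card_univ, Fintype.card_fin, heq]
  · have : (Finset.univ.filter (fun k : Fin p => (k:ℕ) < t)) = Finset.Iio ⟨t, hlt⟩ := by
      ext k
      simp [Fin.lt_def]
    rw [this, Fin.card_Iio]

lemma prod_two_values {p q mn t : ℕ} (α : Fin p → ℕ)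
    (h1 : ∀ k, α k = mn ∨ α k = mn + 1)
    (ht : (Finset.univ.filter (fun k => α k = mn + 1)).card = t) :
    ∏ k, gfun q (α k) = gfun q (mn+1) ^ t * gfun q mn ^ (p - t) := by
  classical
  rw [← Finset.prod_filter_mul_prod_filter_not Finset.univ (fun k => α k = mn + 1)]
  have e1 : ∏ k ∈ Finset.univ.filter (fun k => α k = mn + 1), gfun q (α k)
      = gfun q (mn+1) ^ t := by
    rw [Finset.prod_congr rfl (fun k hk => by
      rw [(Finset.mem_filter.1 hk).2]), Finset.prod_const, ht]
  have hcard : (Finset.univ.filter (fun k => ¬ α k = mn + 1)).card = p - t := by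
    have := Finset.card_filter_add_card_filter_not
      (s := (Finset.univ : Finset (Fin p))) (fun k => α k = mn + 1)
    rw [ht, Finset.card_univ, Fintype.card_fin] at this
    omega
  have e2 : ∏ k ∈ Finset.univ.filter (fun k => ¬ α k = mn + 1), gfun q (α k)
      = gfun q mn ^ (p - t) := by
    rw [Finset.prod_congr rfl (fun k hk => by
      have h2 := (Finset.mem_filter.1 hk).2
      rcases h1 k with h | h
      · rw [h]
      · exact absurd h h2), Finset.prod_const, hcard]
  rw [e1, e2]

lemma key_flat {q p n : ℕ} (hp : 0 < p) (α : Fin p → ℕ)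
    (hflat : ∀ i j, α i ≤ α j + 1) (hsum : ∑ k, α k = n) :
    (∏ k : Fin p, gfun q (if (k:ℕ) < n % p then n / p + 1 else n / p))
      = ∏ k, gfun q (α k) := by
  classical
  obtain ⟨i₀, -, hmin⟩ := Finset.exists_min_image Finset.univ α ⟨⟨0, hp⟩, Finset.mem_univ _⟩
  obtain ⟨mn, hmn⟩ : ∃ m, m = α i₀ := ⟨_, rfl⟩
  rw [← hmn] at hmin
  have hall : ∀ k, α k = mn ∨ α k = mn + 1 := by
    intro k
    have h1 := hmin k (Finset.mem_univ k)
    have h2 := hflat k i₀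
    rw [← hmn] at h2
    omega
  obtain ⟨t', ht'⟩ : ∃ t, t = (Finset.univ.filter (fun k => α k = mn + 1)).card := ⟨_, rfl⟩
  have htp : t' ≤ p := by
    have := Finset.card_filter_le Finset.univ (fun k => α k = mn + 1)
    rw [← ht'] at this
    simpa using this
  have hsum2 : n = mn * p + t' := by
    rw [← hsum, ← Finset.sum_filter_add_sum_filter_not Finset.univ (fun k => α k = mn + 1)]
    have e1 : ∑ k ∈ Finset.univ.filter (fun k => α k = mn + 1), α k = (mn + 1) * t' := by
      rw [Finset.sum_congr rfl (fun k hk => (Finset.mem_filter.1 hk).2), Finset.sum_const,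
        smul_eq_mul, mul_comm, ← ht']
    have hcard : (Finset.univ.filter (fun k => ¬ α k = mn + 1)).card = p - t' := by
      have := Finset.card_filter_add_card_filter_not
        (s := (Finset.univ : Finset (Fin p))) (fun k => α k = mn + 1)
      rw [← ht', Finset.card_univ, Fintype.card_fin] at this
      omega
    have e2 : ∑ k ∈ Finset.univ.filter (fun k => ¬ α k = mn + 1), α k = mn * (p - t') := by
      rw [Finset.sum_congr rfl (fun k hk => by
        have h2 := (Finset.mem_filter.1 hk).2
        rcases hall k with h | h
        · exact h
        · exact absurd h h2), Finset.sum_const, hcard, smul_eq_mul, mul_comm]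
    rw [e1, e2]
    obtain ⟨u, rfl⟩ : ∃ u, p = t' + u := ⟨p - t', by omega⟩
    have : mn * (t' + u) + t' = (mn+1) * t' + mn * u := by ring
    rw [this]
    congr 1
    congr 1
    omega
  rcases eq_or_lt_of_le htp with heq | hlt
  · -- all parts are mn+1
    have huniv : (Finset.univ.filter (fun k => α k = mn + 1)) = Finset.univ := by
      apply Finset.eq_univ_of_card
      rw [← ht', Fintype.card_fin]
      exact heq
    have hallk : ∀ k, α k = mn + 1 := by
      intro k
      have : k ∈ Finset.univ.filter (fun k => α k = mn + 1) := by
        rw [huniv]; exact Finset.mem_univ k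
      exact (Finset.mem_filter.1 this).2
    have hn : n = (mn + 1) * p := by rw [hsum2, heq]; ring
    have hdiv : n / p = mn + 1 := by rw [hn, Nat.mul_div_cancel _ hp]
    have hmod : n % p = 0 := by rw [hn, Nat.mul_mod_left]
    apply Finset.prod_congr rfl
    intro k _
    rw [hallk k, hmod, hdiv]
    simp
  · have hdm : n / p = mn ∧ n % p = t' :=
      (Nat.div_mod_unique hp).2 ⟨by rw [hsum2]; ring, hlt⟩
    rw [prod_two_values α hall ht'.symm]
    apply prod_two_values
    · intro k
      by_cases h : (k:ℕ) < n % p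
      · right; rw [if_pos h, hdm.1]
      · left; rw [if_neg h, hdm.1]
    · have : (Finset.univ.filter
          (fun k : Fin p => (if (k:ℕ) < n % p then n / p + 1 else n / p) = mn + 1))
          = Finset.univ.filter (fun k : Fin p => (k:ℕ) < t') := by
        apply Finset.filter_congr
        intro k _
        rw [hdm.1, hdm.2]
        by_cases h : (k:ℕ) < t'
        · simp [if_pos h, h]
        · simp only [if_neg h, eq_iff_iff]
          constructor
          · intro hc; omega
          · intro hc; exact absurd hc h
      rw [this, card_filter_lt htp]

lemma key {q p : ℕ} (hq : 2 ≤ q) (hp : 0 < p) (n : ℕ) :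
    ∀ (N : ℕ) (α : Fin p → ℕ), (∑ k, α k = n) → (∑ k, (α k)^2 ≤ N) →
    (∏ k : Fin p, gfun q (if (k:ℕ) < n % p then n / p + 1 else n / p)) ≤ ∏ k, gfun q (α k) := by
  intro N
  induction N with
  | zero =>
    intro α hsum hsq
    have hzero : ∀ k, α k = 0 := by
      intro k
      have := Finset.single_le_sum (f := fun k => (α k)^2) (fun k _ => Nat.zero_le _)
        (Finset.mem_univ k)
      nlinarith [sq_nonneg (α k)]
    exact (key_flat hp α (fun i j => by rw [hzero i]; omega) hsum).le
  | succ N ih =>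
    intro α hsum hsq
    by_cases h : ∃ i j, α j + 2 ≤ α i
    · obtain ⟨i, j, hij2⟩ := h
      have hij : j ≠ i := by rintro rfl; omega
      have hsum' : ∑ k, Function.update (Function.update α i (α i - 1)) j (α j + 1) k = n := by
        have h1 := sum_update2 (fun x => x) α hij (α i - 1) (α j + 1)
        beta_reduce at h1
        omega
      have hsq' : ∑ k, (Function.update (Function.update α i (α i - 1)) j (α j + 1) k)^2 ≤ N := by
        have h2 := sum_update2 (fun x => x^2) α hij (α i - 1) (α j + 1)
        beta_reduce at h2
        have harith : (α i - 1)^2 + (α j + 1)^2 + 2 ≤ (α i)^2 + (α j)^2 := by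
          obtain ⟨c, hc⟩ : ∃ c, α i = c + 1 := ⟨α i - 1, by omega⟩
          rw [hc]
          simp only [Nat.add_sub_cancel]
          have e1 : (α j + 1)^2 = (α j)^2 + 2*(α j) + 1 := by ring
          have e2 : (c+1)^2 = c^2 + 2*c + 1 := by ring
          omega
        omega
      have hle : ∏ k, gfun q (Function.update (Function.update α i (α i - 1)) j (α j + 1) k)
          ≤ ∏ k, gfun q (α k) := by
        have hpu := prod_update2 (gfun q) α hij (α i - 1) (α j + 1)
        have hsw := gswap hq hij2
        have hpos : 0 < gfun q (α i) * gfun q (α j) :=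
          Nat.mul_pos (gfun_pos hq _) (gfun_pos hq _)
        apply Nat.le_of_mul_le_mul_right _ hpos
        rw [hpu]
        exact Nat.mul_le_mul_left _ hsw
      exact le_trans (ih _ hsum' hsq') hle
    · push_neg at h
      exact (key_flat hp α (fun i j => by have := h i j; omega) hsum).le

variable {F : Type*} [Field F] [Fintype F]
variable {V : Type*} [AddCommGroup V] [Module F V] [FiniteDimensional F V]

/-- The number of spanning tuples of length `finrank` equals `gfun`. -/
lemma card_spanning :
    Nat.card {v : Fin (Module.finrank F V) → V // Submodule.span F (Set.range v) = ⊤}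
      = gfun (Fintype.card F) (Module.finrank F V) := by
  classical
  have : Finite V := Module.finite_of_finite F
  have hiff : ∀ v : Fin (Module.finrank F V) → V,
      Submodule.span F (Set.range v) = ⊤ ↔ LinearIndependent F v := by
    intro v
    by_cases h0 : Module.finrank F V = 0
    · have hsub : Subsingleton V := (Module.finrank_zero_iff (R := F)).mp h0
      have hie : IsEmpty (Fin (Module.finrank F V)) := by
        rw [h0]; exact Fin.isEmpty
      constructor
      · intro _
        exact linearIndependent_empty_type
      · intro _
        exact Subsingleton.elim _ _
    · constructor
      · intro hsp
        apply linearIndependent_iff_card_eq_finrank_span.2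
        rw [Set.finrank, hsp, finrank_top, Fintype.card_fin]
      · intro hli
        have : Nonempty (Fin (Module.finrank F V)) := ⟨⟨0, Nat.pos_of_ne_zero h0⟩⟩
        exact hli.span_eq_top_of_card_eq_finrank (by rw [Fintype.card_fin])
  have := Nat.card_congr (Equiv.subtypeEquivRight hiff)
  rw [this, card_linearIndependent le_rfl]
  rw [gfun, ← Fin.prod_univ_eq_prod_range]

/-- Transfer spanning tuples of a submodule. -/
noncomputable def toSub (W : Submodule F V) (d : ℕ) :
    {u : Fin d → V // Submodule.span F (Set.range u) = W}
      ≃ {w : Fin d → W // Submodule.span F (Set.range w) = ⊤} where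
  toFun u := ⟨fun j => ⟨u.1 j, by
    have hm : u.1 j ∈ Submodule.span F (Set.range u.1) := Submodule.subset_span ⟨j, rfl⟩
    rwa [u.2] at hm⟩, by
    apply Submodule.map_injective_of_injective W.injective_subtype
    rw [← Submodule.span_image, Submodule.map_top, Submodule.range_subtype, ← Set.range_comp]
    exact u.2⟩
  invFun w := ⟨fun j => (w.1 j : V), by
    have hc : (fun j => (w.1 j : V)) = W.subtype ∘ w.1 := rfl
    rw [hc, Set.range_comp, Submodule.span_image, w.2, Submodule.map_top,
      Submodule.range_subtype]⟩
  left_inv u := by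
    apply Subtype.ext
    funext j
    rfl
  right_inv w := by
    apply Subtype.ext
    funext j
    rfl

section Blocks

variable {p n : ℕ}

def off (α : Fin p → ℕ) (m : ℕ) : ℕ := ∑ i ∈ Finset.univ.filter (fun i : Fin p => (i:ℕ) < m), α i

lemma off_mono (α : Fin p → ℕ) {m m' : ℕ} (h : m ≤ m') : off α m ≤ off α m' := by
  apply Finset.sum_le_sum_of_subset
  intro i hi
  simp only [Finset.mem_filter, Finset.mem_univ, true_and] at *
  omega

lemma off_top (α : Fin p → ℕ) : off α p = ∑ k, α k := by
  unfold off
  rw [Finset.filter_true_of_mem (fun i _ => i.isLt)]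

lemma off_succ (α : Fin p → ℕ) (k : Fin p) : off α (↑k + 1) = off α ↑k + α k := by
  unfold off
  have h1 : Finset.univ.filter (fun i : Fin p => (i:ℕ) < ↑k + 1)
      = insert k (Finset.univ.filter (fun i : Fin p => (i:ℕ) < ↑k)) := by
    ext i
    simp only [Finset.mem_filter, Finset.mem_univ, true_and, Finset.mem_insert, Fin.ext_iff]
    omega
  rw [h1, Finset.sum_insert (by simp)]
  ring

lemma off_block_le (α : Fin p → ℕ) (k : Fin p) : off α ↑k + α k ≤ ∑ i, α i := by
  rw [← off_succ, ← off_top]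
  exact off_mono α k.isLt

def blockSet (α : Fin p → ℕ) (k : Fin p) : Set (Fin n) :=
  {i | off α ↑k ≤ ↑i ∧ (i:ℕ) < off α ↑k + α k}

noncomputable def blockEquiv (α : Fin p → ℕ) (hs : ∑ k, α k = n) :
    (Σ k : Fin p, Fin (α k)) ≃ Fin n :=
  Equiv.ofBijective (fun x => (⟨off α ↑x.1 + ↑x.2, by
    have h1 := off_block_le α x.1
    have h2 := x.2.isLt
    omega⟩ : Fin n))
  (by
    apply (Fintype.bijective_iff_injective_and_card _).2
    constructor
    · rintro ⟨k, j⟩ ⟨k', j'⟩ hxy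
      simp only [Fin.mk.injEq] at hxy
      rcases lt_trichotomy (k:ℕ) (k':ℕ) with h | h | h
      · exfalso
        have h1 : off α (↑k + 1) ≤ off α ↑k' := off_mono α (by omega)
        rw [off_succ] at h1
        have := j.isLt
        omega
      · have hk : k = k' := Fin.ext h
        subst hk
        have : (j:ℕ) = ↑j' := by omega
        exact congrArg (Sigma.mk k) (Fin.ext this)
      · exfalso
        have h1 : off α (↑k' + 1) ≤ off α ↑k := off_mono α (by omega)
        rw [off_succ] at h1
        have := j'.isLt
        omega
    · simp [Fintype.card_sigma, hs])

lemma blockEquiv_val (α : Fin p → ℕ) (hs : ∑ k, α k = n) (k : Fin p) (j : Fin (α k)) :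
    ((blockEquiv α hs ⟨k, j⟩ : Fin n) : ℕ) = off α ↑k + ↑j := rfl

lemma image_blockSet (α : Fin p → ℕ) (hs : ∑ k, α k = n) (v : Fin n → V) (k : Fin p) :
    v '' blockSet α k = Set.range (fun j : Fin (α k) => v (blockEquiv α hs ⟨k, j⟩)) := by
  ext x
  constructor
  · rintro ⟨i, ⟨hi1, hi2⟩, rfl⟩
    refine ⟨⟨(i:ℕ) - off α ↑k, by omega⟩, ?_⟩
    show v _ = v i
    apply congrArg
    apply Fin.ext
    rw [blockEquiv_val]
    show off α ↑k + ((i:ℕ) - off α ↑k) = ↑i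
    omega
  · rintro ⟨j, rfl⟩
    refine ⟨blockEquiv α hs ⟨k, j⟩, ?_, rfl⟩
    constructor
    · rw [blockEquiv_val]; omega
    · rw [blockEquiv_val]
      have := j.isLt
      omega

def refines (α : Fin p → ℕ) (a : Fin p → Submodule F V) (v : Fin n → V) : Prop :=
  ∀ k, Submodule.span F (v '' blockSet α k) = a k

lemma card_refines (α : Fin p → ℕ) (hs : ∑ k, α k = n)
    (a : Fin p → Submodule F V) (hdim : ∀ k, Module.finrank F (a k) = α k) :
    Nat.card {v : Fin n → V // refines α a v}
      = ∏ k, gfun (Fintype.card F) (α k) := by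
  classical
  let E0 := blockEquiv α hs
  let e1 : {v : Fin n → V // refines α a v} ≃
      {u : (Σ k : Fin p, Fin (α k)) → V //
        ∀ k, Submodule.span F (Set.range fun j : Fin (α k) => u ⟨k, j⟩) = a k} :=
    Equiv.subtypeEquiv ((Equiv.arrowCongr E0 (Equiv.refl V)).symm) (by
      intro v
      unfold refines
      constructor
      · intro h k
        rw [← h k, image_blockSet α hs v k]
        rfl
      · intro h k
        rw [image_blockSet α hs v k, ← h k]
        rfl)
  let e2 : {u : (Σ k : Fin p, Fin (α k)) → V //
        ∀ k, Submodule.span F (Set.range fun j : Fin (α k) => u ⟨k, j⟩) = a k} ≃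
      {w : ∀ k : Fin p, Fin (α k) → V //
        ∀ k, Submodule.span F (Set.range (w k)) = a k} :=
    Equiv.subtypeEquiv (Equiv.piCurry fun _ _ => V) (fun u => Iff.rfl)
  let e3 := Equiv.subtypePiEquivPi (β := fun k : Fin p => Fin (α k) → V)
    (p := fun k w => Submodule.span F (Set.range w) = a k)
  let e4 := Equiv.piCongrRight (fun k : Fin p => toSub (a k) (α k))
  rw [Nat.card_congr (((e1.trans e2).trans e3).trans e4), Nat.card_pi]
  apply Finset.prod_congr rfl
  intro k _
  have hc := card_spanning (F := F) (V := (a k : Submodule F V))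
  rw [hdim k] at hc
  exact hc

end Blocks

lemma refines_le (b b' : Fin p → Submodule F V) (v : Fin n → V) (k : Fin p)
    (hb : refines (fun k => Module.finrank F (b k)) b v)
    (hb' : refines (fun k => Module.finrank F (b' k)) b' v)
    (hoffb : off (fun k => Module.finrank F (b k)) ↑k
      = off (fun k => Module.finrank F (b' k)) ↑k)
    (hle : Module.finrank F (b k) ≤ Module.finrank F (b' k)) : b k ≤ b' k := by
  rw [← hb k, ← hb' k]
  apply Submodule.span_mono
  apply Set.image_mono
  intro i hi
  simp only [blockSet, Set.mem_setOf_eq] at *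
  omega

lemma refines_eq (a a' : Fin p → Submodule F V)
    (hsum : ∑ k, Module.finrank F (a k) = n) (hsum' : ∑ k, Module.finrank F (a' k) = n)
    (hcomp : ∀ k : Fin p, (k:ℕ) + 1 < p → (a k ≤ a' k ∨ a' k ≤ a k) → a k = a' k)
    (v : Fin n → V) (hv : refines (fun k => Module.finrank F (a k)) a v)
    (hv' : refines (fun k => Module.finrank F (a' k)) a' v) : a = a' := by
  have main : ∀ m : ℕ, ∀ k : Fin p, (k:ℕ) < m → a k = a' k := by
    intro m
    induction m with
    | zero => exact fun k hk => absurd hk (Nat.not_lt_zero _)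
    | succ m ih =>
      intro k hk
      by_cases hkm : (k:ℕ) < m
      · exact ih k hkm
      have hoff : off (fun k => Module.finrank F (a k)) ↑k
          = off (fun k => Module.finrank F (a' k)) ↑k := by
        unfold off
        apply Finset.sum_congr rfl
        intro i hi
        simp only [Finset.mem_filter, Finset.mem_univ, true_and] at hi
        show Module.finrank F (a i) = Module.finrank F (a' i)
        rw [ih i (by omega)]
      rcases Nat.lt_or_ge ((k:ℕ) + 1) p with hklt | hkge
      · rcases le_total (Module.finrank F (a k)) (Module.finrank F (a' k)) with hle | hle
        · exact hcomp k hklt (Or.inl (refines_le a a' v k hv hv' hoff hle))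
        · exact hcomp k hklt (Or.inr (refines_le a' a v k hv' hv hoff.symm hle))
      · -- k is the last coordinate
        have hkp : (k:ℕ) + 1 = p := by have := k.isLt; omega
        have h1 : off (fun k => Module.finrank F (a k)) ↑k + Module.finrank F (a k) = n := by
          rw [← off_succ, hkp, off_top, hsum]
        have h2 : off (fun k => Module.finrank F (a' k)) ↑k + Module.finrank F (a' k) = n := by
          rw [← off_succ, hkp, off_top, hsum']
        have hαeq : Module.finrank F (a k) = Module.finrank F (a' k) := by omega
        exact le_antisymm (refines_le a a' v k hv hv' hoff hαeq.le)
          (refines_le a' a v k hv' hv hoff.symm hαeq.ge)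
  funext k
  exact main p k k.isLt

lemma gauss_eq {q n p : ℕ} (hq : 2 ≤ q) (α : Fin p → ℕ) (hs : ∑ i, α i = n) :
    gaussMultinomial q n α * (q:ℚ) ^ (s2 α) = (gfun q n : ℚ) / ∏ k, (gfun q (α k) : ℚ) := by
  have hqF : ∀ m : ℕ, ((qFact q m : ℕ) : ℚ) ≠ 0 := by
    intro m
    exact_mod_cast (qFact_pos hq m).ne'
  have hq0 : (q : ℚ) ≠ 0 := by
    have : (0:ℚ) < (q:ℚ) := by exact_mod_cast (by omega : 0 < q)
    exact this.ne'
  have h2 : ∀ k : Fin p, ((gfun q (α k) : ℕ) : ℚ)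
      = (q:ℚ) ^ (∑ j ∈ range (α k), j) * (qFact q (α k) : ℚ) := by
    intro k
    rw [gfun_eq]
    push_cast
    ring
  rw [Finset.prod_congr rfl (fun k _ => h2 k), Finset.prod_mul_distrib,
    Finset.prod_pow_eq_pow_sum, gfun_eq q n]
  push_cast
  rw [← s2_exp α hs, pow_add]
  rw [gaussMultinomial]
  have hD : (∏ k, (qFact q (α k) : ℚ)) ≠ 0 := Finset.prod_ne_zero_iff.2 (fun k _ => hqF (α k))
  field_simp

lemma beta_sum {p n : ℕ} (hp : 0 < p) :
    ∑ i : Fin p, (if (i:ℕ) < n % p then n / p + 1 else n / p) = n := by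
  have h1 : ∀ i : Fin p, (if (i:ℕ) < n % p then n / p + 1 else n / p)
      = n / p + (if (i:ℕ) < n % p then 1 else 0) := by
    intro i
    split <;> omega
  rw [Finset.sum_congr rfl (fun i _ => h1 i), Finset.sum_add_distrib, Finset.sum_const,
    Finset.card_univ, Fintype.card_fin, smul_eq_mul, ← Finset.card_filter,
    card_filter_lt (le_of_lt (Nat.mod_lt n hp)), Nat.div_add_mod]


end MeshAux

open MeshAux in
/-- Antichain case of the projective Meshalkin theorem, counting form: for a family `M`
of Meshalkin sequences of length `p ≥ 2` in `PG(n-1,q)` with each `M_k` for `k < p` an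
antichain, `|M| ≤ [n; β]_q · q^(s_2(β))` where `β` is the balanced composition of `n`
into `p` parts, each `⌈n/p⌉` or `⌊n/p⌋` (with `n mod p` parts equal to `⌈n/p⌉`);
this is the maximum of `[n; α]_q · q^(s_2(α))` over compositions `α` of `n`. -/
theorem meshalkin_projective_antichain_bound (q n p : ℕ) (hp : 2 ≤ p)
    (F : Type*) [Field F] [Fintype F] (hq : Fintype.card F = q)
    (V : Type*) [AddCommGroup V] [Module F V] [FiniteDimensional F V]
    (hn : Module.finrank F V = n)
    (M : Finset (Fin p → Submodule F V))
    (hmesh : ∀ a ∈ M, (⨆ i, a i) = ⊤ ∧ ∑ i, Module.finrank F (a i) = n)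
    (hanti : ∀ k : Fin p, (k : ℕ) + 1 < p →
      IsAntichain (· ≤ ·) {b : Submodule F V | ∃ a ∈ M, a k = b})
    (β : Fin p → ℕ) (hβ : β = fun i : Fin p => if (i : ℕ) < n % p then n / p + 1 else n / p) :
    (M.card : ℚ) ≤ gaussMultinomial q n β * (q : ℚ) ^ (s2 β) ∧
      ∀ α : Fin p → ℕ, ∑ i, α i = n →
        gaussMultinomial q n α * (q : ℚ) ^ (s2 α) ≤
          gaussMultinomial q n β * (q : ℚ) ^ (s2 β) := by
  classical
  subst hβ
  subst hq
  subst hn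
  set q := Fintype.card F with hqdef
  set n := Module.finrank F V with hndef
  have hq2 : 2 ≤ q := Fintype.one_lt_card
  have hp0 : 0 < p := by omega
  have hβsum : ∑ i : Fin p, (if (i:ℕ) < n % p then n / p + 1 else n / p) = n := beta_sum hp0
  have hBpos : 0 < ∏ k : Fin p, gfun q (if (k:ℕ) < n % p then n / p + 1 else n / p) :=
    Finset.prod_pos (fun k _ => gfun_pos hq2 _)
  have hgb := gauss_eq (n := n) hq2
    (fun i : Fin p => if (i:ℕ) < n % p then n / p + 1 else n / p) hβsum
  constructor
  · -- the counting bound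
    have hfinV : Finite V := Module.finite_of_finite F
    letI : Fintype V := Fintype.ofFinite V
    set Ref : (Fin p → Submodule F V) → Finset (Fin n → V) :=
      fun a => Finset.univ.filter (refines (fun k => Module.finrank F (a k)) a) with hRef
    have hScard : (Finset.univ.filter
        (fun v : Fin n → V => Submodule.span F (Set.range v) = ⊤)).card = gfun q n := by
      rw [← Fintype.card_subtype, ← Nat.card_eq_fintype_card]
      exact card_spanning
    have hcard : ∀ a ∈ M, (Ref a).card = ∏ k, gfun q (Module.finrank F (a k)) := by
      intro a ha
      rw [hRef]
      rw [← Fintype.card_subtype, ← Nat.card_eq_fintype_card]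
      exact card_refines (fun k => Module.finrank F (a k)) (hmesh a ha).2 a (fun k => rfl)
    have hsub : ∀ a ∈ M, Ref a ⊆ Finset.univ.filter
        (fun v : Fin n → V => Submodule.span F (Set.range v) = ⊤) := by
      intro a ha v hv
      simp only [hRef, Finset.mem_filter] at *
      refine ⟨Finset.mem_univ v, ?_⟩
      have hA : ∀ k, a k ≤ Submodule.span F (Set.range v) := by
        intro k
        rw [← hv.2 k]
        exact Submodule.span_mono (Set.image_subset_range v _)
      rw [eq_top_iff, ← (hmesh a ha).1]
      exact iSup_le hA
    have hdisj : ∀ a ∈ M, ∀ b ∈ M, a ≠ b → Disjoint (Ref a) (Ref b) := by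
      intro a ha b hb hab
      rw [Finset.disjoint_left]
      intro v hva hvb
      apply hab
      refine refines_eq a b (hmesh a ha).2 (hmesh b hb).2 ?_ v ?_ ?_
      · intro k hk hor
        by_contra hne
        rcases hor with h | h
        · exact hanti k hk ⟨a, ha, rfl⟩ ⟨b, hb, rfl⟩ hne h
        · exact hanti k hk ⟨b, hb, rfl⟩ ⟨a, ha, rfl⟩ (Ne.symm hne) h
      · exact (Finset.mem_filter.1 hva).2
      · exact (Finset.mem_filter.1 hvb).2
    have hsum_le : ∑ a ∈ M, (Ref a).card ≤ gfun q n := by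
      rw [← Finset.card_biUnion hdisj, ← hScard]
      exact Finset.card_le_card (Finset.biUnion_subset.2 hsub)
    have hMB : M.card * (∏ k : Fin p, gfun q (if (k:ℕ) < n % p then n / p + 1 else n / p))
        ≤ gfun q n := by
      have h1 := Finset.card_nsmul_le_sum M (fun a => (Ref a).card)
        (∏ k : Fin p, gfun q (if (k:ℕ) < n % p then n / p + 1 else n / p))
        (fun a ha => by
          show _ ≤ (Ref a).card
          rw [hcard a ha]
          exact key hq2 hp0 n _ _ (hmesh a ha).2 le_rfl)
      rw [smul_eq_mul] at h1
      exact h1.trans hsum_le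
    rw [hgb, le_div_iff₀ (by exact_mod_cast hBpos)]
    have := (Nat.cast_le (α := ℚ)).2 hMB
    push_cast at this ⊢
    convert this using 2
  · -- maximality of the balanced composition
    intro α hα
    rw [hgb, gauss_eq hq2 α hα]
    have hkey := key hq2 hp0 n (∑ k, (α k)^2) α hα le_rfl
    have hc1 : (0:ℚ) < ∏ k : Fin p, (gfun q (if (k:ℕ) < n % p then n / p + 1 else n / p) : ℚ) := by
      exact_mod_cast hBpos
    have hc2 : (∏ k : Fin p, (gfun q (if (k:ℕ) < n % p then n / p + 1 else n / p) : ℚ))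
        ≤ ∏ k, (gfun q (α k) : ℚ) := by exact_mod_cast hkey
    have hc0 : (0:ℚ) ≤ (gfun q n : ℚ) := by positivity
    exact div_le_div_of_nonneg_left hc0 hc1 hc2
end

section
/- Under the hypotheses of the Meshalkin theorem for projective geometries (M a family of Meshalkin sequences of length p ≥ 2 in PG(n-1,q), each M_k for k ∈ {1,…,p-1} containing no chain of length l), the sum Σ_{a ∈ M} 1/[n; r(a)]_q is bounded above by the sum of the l^{p-1} largest expressions q^{s_2(α)} over nonnegative integer sequences α = (α_1,…,α_p) with α_1+⋯+α_p = n. -/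
open Finset

/-- A family is `l`-chain-free if it contains no chain of length `l`, i.e. no `l + 1`
distinct pairwise comparable members. -/
def ChainFree {X : Type*} [PartialOrder X] (l : ℕ) (A : Set X) : Prop :=
  ¬ ∃ c : Fin (l + 1) → X, StrictMono c ∧ ∀ i, c i ∈ A

set_option maxHeartbeats 1000000

def mlN (q d : ℕ) : ℕ := ∏ i ∈ Finset.range d, (q ^ d - q ^ i)

lemma mlN_eq (q d : ℕ) (hq : 1 ≤ q) : mlN q d = q ^ (d.choose 2) * qFact q d := by
  unfold mlN qFact
  have h1 : ∀ i ∈ Finset.range d, q ^ d - q ^ i = q ^ i * (q ^ (d - 1 - i + 1) - 1) := by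
    intro i hi
    rw [Finset.mem_range] at hi
    rw [Nat.mul_sub, mul_one, ← pow_add]
    congr 2
    omega
  rw [Finset.prod_congr rfl h1, Finset.prod_mul_distrib, Finset.prod_pow_eq_pow_sum]
  congr 1
  · rw [Finset.sum_range_id, Nat.choose_two_right]
  · rw [← Finset.prod_range_reflect]
    apply Finset.prod_congr rfl
    intro j hj
    rw [Finset.mem_range] at hj
    congr 2
    omega

lemma qFact_pos (q n : ℕ) (hq : 2 ≤ q) : 0 < qFact q n := by
  unfold qFact
  apply Finset.prod_pos
  intro i _
  have h1 : 2 ^ (i+1) ≤ q ^ (i+1) := Nat.pow_le_pow_left hq _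
  have h2 : 2 ≤ 2 ^ (i+1) := by
    have := Nat.one_lt_two_pow_iff (n := i+1)
    omega
  omega

lemma mlN_pos (q d : ℕ) (hq : 2 ≤ q) : 0 < mlN q d := by
  rw [mlN_eq q d (by omega)]
  exact Nat.mul_pos (Nat.pow_pos (by omega)) (qFact_pos q d hq)

lemma two_choose_two (m : ℕ) : 2 * m.choose 2 = m * (m - 1) := by
  rw [Nat.choose_two_right, Nat.mul_div_cancel']
  cases m with
  | zero => simp
  | succ k =>
    simp only [Nat.add_sub_cancel]
    exact (even_iff_two_dvd.mp (by rw [Nat.mul_comm]; exact Nat.even_mul_succ_self k))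

lemma sq_sum {p : ℕ} (d : Fin p → ℕ) :
    (∑ i, d i) * (∑ i, d i) = ∑ i, d i * d i + 2 * s2 d := by
  rw [Finset.sum_mul_sum]
  unfold s2
  have key : ∀ i : Fin p, ∑ j, d i * d j =
      d i * d i + (∑ j ∈ Finset.univ.filter (fun j : Fin p => i < j), d i * d j
        + ∑ j ∈ Finset.univ.filter (fun j : Fin p => j < i), d i * d j) := by
    intro i
    rw [← Finset.sum_filter_add_sum_filter_not Finset.univ (fun j : Fin p => i < j)
      (fun j => d i * d j)]
    have hnot : ∑ j ∈ Finset.univ.filter (fun j : Fin p => ¬ i < j), d i * d j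
        = d i * d i + ∑ j ∈ Finset.univ.filter (fun j : Fin p => j < i), d i * d j := by
      have hins : Finset.univ.filter (fun j : Fin p => ¬ i < j) =
          insert i (Finset.univ.filter (fun j : Fin p => j < i)) := by
        ext j
        simp only [Finset.mem_filter, Finset.mem_insert, Finset.mem_univ, true_and, not_lt]
        rw [Fin.le_def, Fin.lt_def, Fin.ext_iff]
        omega
      rw [hins, Finset.sum_insert (by simp)]
    rw [hnot]; ring
  rw [Finset.sum_congr rfl (fun i _ => key i), Finset.sum_add_distrib, Finset.sum_add_distrib]
  have hswap : ∑ i : Fin p, ∑ j ∈ Finset.univ.filter (fun j : Fin p => j < i), d i * d j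
      = ∑ i : Fin p, ∑ j ∈ Finset.univ.filter (fun j : Fin p => i < j), d i * d j := by
    rw [Finset.sum_comm' (t' := Finset.univ)
      (s' := fun j : Fin p => Finset.univ.filter (fun i : Fin p => j < i)) (by simp)]
    apply Finset.sum_congr rfl
    intro i _
    apply Finset.sum_congr rfl
    intro j _
    exact Nat.mul_comm _ _
  rw [hswap]; ring

lemma choose_sum_eq {p : ℕ} (d : Fin p → ℕ) :
    (∑ i, d i).choose 2 = (∑ i, (d i).choose 2) + s2 d := by
  apply Nat.eq_of_mul_eq_mul_left (show 0 < 2 by omega)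
  rw [Nat.mul_add, two_choose_two, Finset.mul_sum]
  rw [Finset.sum_congr rfl (fun i _ => two_choose_two (d i))]
  set m := ∑ i, d i with hm
  suffices h : m * (m - 1) + m = ((∑ i : Fin p, d i * (d i - 1)) + 2 * s2 d) + m by omega
  have h1 : m * (m - 1) + m = m * m := by
    cases m with
    | zero => simp
    | succ k => simp only [Nat.add_sub_cancel]; ring
  have h2 : ∀ i : Fin p, d i * (d i - 1) + d i = d i * d i := by
    intro i
    cases hdi : d i with
    | zero => simp
    | succ k => simp only [Nat.add_sub_cancel]; ring
  rw [h1, hm, sq_sum]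
  have h3 : ((∑ i : Fin p, d i * (d i - 1)) + 2 * s2 d) + ∑ i, d i
      = ((∑ i : Fin p, d i * (d i - 1)) + ∑ i, d i) + 2 * s2 d := by ring
  rw [h3, ← Finset.sum_add_distrib, Finset.sum_congr rfl (fun i _ => h2 i)]

lemma ml_chain_bound {X : Type*} [PartialOrder X] {l : ℕ} {A : Set X} (hA : ChainFree l A)
    (T : Finset ℕ) (φ : ℕ → X) (hφ : ∀ s ∈ T, ∀ t ∈ T, s < t → φ s < φ t)
    (hmem : ∀ t ∈ T, φ t ∈ A) : T.card ≤ l := by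
  by_contra hc
  push_neg at hc
  obtain ⟨S, hST, hScard⟩ := Finset.exists_subset_card_eq (show l + 1 ≤ T.card by omega)
  have hS : ∀ t ∈ S, t ∈ T := fun t ht => hST ht
  let e := S.orderIsoOfFin hScard
  refine hA ⟨fun i => φ (e i), ?_, fun i => hmem _ (hS _ (e i).2)⟩
  intro i j hij
  exact hφ _ (hS _ (e i).2) _ (hS _ (e j).2) (e.strictMono hij)

lemma ml_branch {γ : Type*} [DecidableEq γ] (l : ℕ) : ∀ (m : ℕ) (S : Finset (Fin m → γ)),
    (∀ k : Fin m, ∀ f ∈ S,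
      ((S.filter (fun g => ∀ j : Fin m, (j : ℕ) < (k : ℕ) → g j = f j)).image
        (fun g => g k)).card ≤ l) →
    S.card ≤ l ^ m := by
  intro m
  induction m with
  | zero =>
    intro S _
    simp only [pow_zero]
    exact Finset.card_le_one.mpr (fun a _ b _ => funext (fun j => absurd j.2 (by omega)))
  | succ m ih =>
    intro S hS
    classical
    set r : (Fin (m+1) → γ) → (Fin m → γ) := fun f => f ∘ Fin.castSucc with hr
    have hcast : ∀ (j : Fin (m+1)) (hj : (j : ℕ) < m),
        Fin.castSucc (⟨(j : ℕ), hj⟩ : Fin m) = j := fun j hj => Fin.ext rfl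
    have hcard : S.card = ∑ g ∈ S.image r, (S.filter (fun f => r f = g)).card :=
      Finset.card_eq_sum_card_fiberwise (fun f hf => Finset.mem_image_of_mem r hf)
    have hfib : ∀ g ∈ S.image r, (S.filter (fun f => r f = g)).card ≤ l := by
      intro g hg
      obtain ⟨f0, hf0S, hf0⟩ := Finset.mem_image.mp hg
      have hinj : Set.InjOn (fun f : Fin (m+1) → γ => f (Fin.last m))
          ↑(S.filter (fun f => r f = g)) := by
        intro f1 h1 f2 h2 heq
        simp only [Finset.coe_filter, Set.mem_setOf_eq] at h1 h2
        funext j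
        rcases Fin.eq_castSucc_or_eq_last j with ⟨j', rfl⟩ | rfl
        · have := congrFun (h1.2.trans h2.2.symm) j'
          simpa [hr] using this
        · exact heq
      calc (S.filter (fun f => r f = g)).card
          = ((S.filter (fun f => r f = g)).image (fun f => f (Fin.last m))).card :=
            (Finset.card_image_of_injOn hinj).symm
        _ ≤ ((S.filter (fun f => ∀ j : Fin (m+1), (j : ℕ) < ((Fin.last m : Fin (m+1)) : ℕ) →
              f j = f0 j)).image (fun f => f (Fin.last m))).card := by
            apply Finset.card_le_card
            apply Finset.image_subset_image
            intro f hf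
            simp only [Finset.mem_filter] at hf ⊢
            refine ⟨hf.1, fun j hj => ?_⟩
            have hjm : (j : ℕ) < m := by simpa using hj
            have := congrFun (hf.2.trans hf0.symm) ⟨(j : ℕ), hjm⟩
            simp only [hr, Function.comp_apply, hcast j hjm] at this
            exact this
        _ ≤ l := hS (Fin.last m) f0 hf0S
    have himg : (S.image r).card ≤ l ^ m := by
      apply ih
      intro k g hg
      obtain ⟨f0, hf0S, hf0⟩ := Finset.mem_image.mp hg
      calc (((S.image r).filter (fun g' => ∀ j : Fin m, (j : ℕ) < (k : ℕ) → g' j = g j)).image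
            (fun g' => g' k)).card
          ≤ ((S.filter (fun f => ∀ j : Fin (m+1), (j : ℕ) < ((Fin.castSucc k : Fin (m+1)) : ℕ) →
              f j = f0 j)).image (fun f => f (Fin.castSucc k))).card := by
            apply Finset.card_le_card
            intro x hx
            simp only [Finset.mem_image, Finset.mem_filter] at hx ⊢
            obtain ⟨g', ⟨hg'i, hg'pre⟩, hg'x⟩ := hx
            obtain ⟨f', hf'S, hf'⟩ := hg'i
            refine ⟨f', ⟨hf'S, fun j hj => ?_⟩, ?_⟩
            · have hjm : (j : ℕ) < m := by
                have : (k : ℕ) < m := k.2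
                simp only [Fin.coe_castSucc] at hj
                omega
              have hjk : (j : ℕ) < (k : ℕ) := by simpa using hj
              have e1 : f' j = g' ⟨(j : ℕ), hjm⟩ := by
                rw [← hf']; simp only [hr, Function.comp_apply, hcast j hjm]
              have e2 : g ⟨(j : ℕ), hjm⟩ = f0 j := by
                rw [← hf0]; simp only [hr, Function.comp_apply, hcast j hjm]
              rw [e1, hg'pre _ hjk, e2]
            · rw [← hg'x, ← hf']; rfl
        _ ≤ l := hS (Fin.castSucc k) f0 hf0S
    calc S.card = ∑ g ∈ S.image r, (S.filter (fun f => r f = g)).card := hcard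
      _ ≤ ∑ _g ∈ S.image r, l := Finset.sum_le_sum hfib
      _ = (S.image r).card * l := by rw [Finset.sum_const, smul_eq_mul]
      _ ≤ l ^ m * l := Nat.mul_le_mul_right l himg
      _ = l ^ (m + 1) := by rw [pow_succ]

lemma ml_topm {ι : Type*} [DecidableEq ι] (v : ι → ℚ) :
    ∀ (m : ℕ) (P : Finset ι), m ≤ P.card →
    ∃ T ⊆ P, T.card = m ∧ ∀ x ∈ T, ∀ y ∈ P, y ∉ T → v y ≤ v x := by
  intro m
  induction m with
  | zero => exact fun P _ => ⟨∅, Finset.empty_subset P, rfl, by simp⟩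
  | succ m ih =>
    intro P hm
    have hP : P.Nonempty := Finset.card_pos.mp (by omega)
    obtain ⟨x0, hx0P, hx0⟩ := Finset.exists_max_image P v hP
    obtain ⟨T', hT'sub, hT'card, hT'⟩ := ih (P.erase x0)
      (by rw [Finset.card_erase_of_mem hx0P]; omega)
    have hx0T' : x0 ∉ T' := fun h => (Finset.mem_erase.mp (hT'sub h)).1 rfl
    refine ⟨insert x0 T', ?_, ?_, ?_⟩
    · intro x hx
      rcases Finset.mem_insert.mp hx with rfl | hx
      · exact hx0P
      · exact (Finset.erase_subset x0 P) (hT'sub hx)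
    · rw [Finset.card_insert_of_notMem hx0T', hT'card]
    · intro x hx y hyP hyT
      rcases Finset.mem_insert.mp hx with rfl | hx
      · exact hx0 y hyP
      · refine hT' x hx y ?_ (fun h => hyT (Finset.mem_insert_of_mem h))
        exact Finset.mem_erase.mpr ⟨fun h => hyT (h ▸ Finset.mem_insert_self x0 T'), hyP⟩

lemma ml_select {ι : Type*} [DecidableEq ι] (P : Finset ι) (c v : ι → ℚ) (m : ℕ)
    (hc0 : ∀ i ∈ P, 0 ≤ c i) (hc1 : ∀ i ∈ P, c i ≤ 1) (hv : ∀ i ∈ P, 0 ≤ v i)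
    (hs : ∑ i ∈ P, c i ≤ m) :
    ∃ T ⊆ P, T.card ≤ m ∧ ∑ i ∈ P, c i * v i ≤ ∑ i ∈ T, v i := by
  by_cases hcard : P.card ≤ m
  · exact ⟨P, le_rfl, hcard, Finset.sum_le_sum (fun i hi =>
      mul_le_of_le_one_left (hv i hi) (hc1 i hi))⟩
  push_neg at hcard
  rcases Nat.eq_zero_or_pos m with rfl | hm
  · refine ⟨∅, Finset.empty_subset P, le_rfl, ?_⟩
    rw [Finset.sum_empty]
    have : ∀ i ∈ P, c i = 0 := by
      intro i hi
      have h1 : ∑ j ∈ P, c j ≤ 0 := by exact_mod_cast hs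
      have h2 : 0 ≤ ∑ j ∈ P, c j := Finset.sum_nonneg hc0
      have h3 : ∑ j ∈ P, c j = 0 := le_antisymm h1 h2
      exact (Finset.sum_eq_zero_iff_of_nonneg hc0).mp h3 i hi
    apply le_of_eq
    exact Finset.sum_eq_zero (fun i hi => by rw [this i hi, zero_mul])
  obtain ⟨T, hTP, hTcard, hTmax⟩ := ml_topm v m P hcard.le
  have hTne : T.Nonempty := Finset.card_pos.mp (by omega)
  obtain ⟨x0, hx0T, hx0min⟩ := Finset.exists_min_image T v hTne
  set μ := v x0 with hμ
  have hμ0 : 0 ≤ μ := hv x0 (hTP hx0T)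
  have hout : ∀ y ∈ P \ T, v y ≤ μ := by
    intro y hy
    rw [Finset.mem_sdiff] at hy
    exact hTmax x0 hx0T y hy.1 hy.2
  refine ⟨T, hTP, hTcard.le, ?_⟩
  have hsplit : ∑ i ∈ P, c i * v i = ∑ i ∈ P \ T, c i * v i + ∑ i ∈ T, c i * v i :=
    (Finset.sum_sdiff hTP).symm
  have h1 : ∑ i ∈ P \ T, c i * v i ≤ (∑ i ∈ P \ T, c i) * μ := by
    rw [Finset.sum_mul]
    apply Finset.sum_le_sum
    intro i hi
    exact mul_le_mul_of_nonneg_left (hout i hi) (hc0 i ((Finset.sdiff_subset) hi))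
  have h2 : ∑ i ∈ P \ T, c i ≤ (m : ℚ) - ∑ i ∈ T, c i := by
    have : ∑ i ∈ P \ T, c i + ∑ i ∈ T, c i = ∑ i ∈ P, c i := Finset.sum_sdiff hTP
    linarith
  have h3 : ((m : ℚ) - ∑ i ∈ T, c i) = ∑ i ∈ T, (1 - c i) := by
    rw [Finset.sum_sub_distrib, Finset.sum_const, nsmul_eq_mul, mul_one, hTcard]
  have h4 : ((m : ℚ) - ∑ i ∈ T, c i) * μ ≤ ∑ i ∈ T, (1 - c i) * v i := by
    rw [h3, Finset.sum_mul]
    apply Finset.sum_le_sum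
    intro i hi
    exact mul_le_mul_of_nonneg_left (hx0min i hi) (by linarith [hc1 i (hTP hi)])
  have h5 : (∑ i ∈ P \ T, c i) * μ ≤ ((m : ℚ) - ∑ i ∈ T, c i) * μ :=
    mul_le_mul_of_nonneg_right h2 hμ0
  have h6 : ∑ i ∈ T, c i * v i + ∑ i ∈ T, (1 - c i) * v i = ∑ i ∈ T, v i := by
    rw [← Finset.sum_add_distrib]
    exact Finset.sum_congr rfl (fun i _ => by ring)
  calc ∑ i ∈ P, c i * v i = ∑ i ∈ P \ T, c i * v i + ∑ i ∈ T, c i * v i := hsplit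
    _ ≤ ∑ i ∈ T, (1 - c i) * v i + ∑ i ∈ T, c i * v i := by
        linarith [h1, h5, h4]
    _ = ∑ i ∈ T, v i := by rw [add_comm]; exact h6

def mlBeta {p : ℕ} (d : Fin p → ℕ) (t : ℕ) : ℕ :=
  ∑ k ∈ Finset.univ.filter (fun k : Fin p => (k : ℕ) < t), d k

lemma mlBeta_zero {p : ℕ} (d : Fin p → ℕ) : mlBeta d 0 = 0 := by
  unfold mlBeta
  rw [Finset.filter_false_of_mem (fun k _ => by omega), Finset.sum_empty]

lemma mlBeta_mono {p : ℕ} (d : Fin p → ℕ) {t t' : ℕ} (h : t ≤ t') :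
    mlBeta d t ≤ mlBeta d t' := by
  apply Finset.sum_le_sum_of_subset
  intro k hk
  simp only [Finset.mem_filter, Finset.mem_univ, true_and] at hk ⊢
  omega

lemma mlBeta_succ {p : ℕ} (d : Fin p → ℕ) (k : Fin p) :
    mlBeta d ((k : ℕ) + 1) = mlBeta d (k : ℕ) + d k := by
  unfold mlBeta
  have : Finset.univ.filter (fun k' : Fin p => (k' : ℕ) < (k : ℕ) + 1) =
      insert k (Finset.univ.filter (fun k' : Fin p => (k' : ℕ) < (k : ℕ))) := by
    ext k'
    simp only [Finset.mem_filter, Finset.mem_univ, true_and, Finset.mem_insert, Fin.ext_iff]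
    omega
  rw [this, Finset.sum_insert (by simp), add_comm]

lemma mlBeta_top {p : ℕ} (d : Fin p → ℕ) : mlBeta d p = ∑ k, d k := by
  unfold mlBeta
  congr 1
  rw [Finset.filter_true_of_mem (fun k _ => k.2)]

lemma mlK_exists {p : ℕ} (d : Fin p → ℕ) (j : ℕ) (hj : j < mlBeta d p) :
    ∃ k : Fin p, mlBeta d (k : ℕ) ≤ j ∧ j < mlBeta d (k : ℕ) + d k := by
  rcases Nat.eq_zero_or_pos p with rfl | hp
  · rw [mlBeta_zero] at hj; omega
  have hex : ∃ t, j < mlBeta d (t + 1) := ⟨p - 1, by rwa [show p - 1 + 1 = p by omega]⟩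
  have hspec : j < mlBeta d (Nat.find hex + 1) := Nat.find_spec hex
  have ht0p : Nat.find hex < p := by
    have : Nat.find hex ≤ p - 1 := Nat.find_le (by rwa [show p - 1 + 1 = p by omega])
    omega
  refine ⟨⟨Nat.find hex, ht0p⟩, ?_, ?_⟩
  · show mlBeta d (Nat.find hex) ≤ j
    rcases Nat.eq_zero_or_pos (Nat.find hex) with h0 | h0
    · rw [h0, mlBeta_zero]; omega
    · have hmin : ¬ j < mlBeta d (Nat.find hex - 1 + 1) := Nat.find_min hex (by omega)
      rw [show Nat.find hex - 1 + 1 = Nat.find hex by omega] at hmin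
      omega
  · have := mlBeta_succ d ⟨Nat.find hex, ht0p⟩
    show j < mlBeta d (Nat.find hex) + d ⟨Nat.find hex, ht0p⟩
    rw [← this]
    exact hspec

lemma mlK_unique {p : ℕ} (d : Fin p → ℕ) (j : ℕ) (k k' : Fin p)
    (h : mlBeta d (k : ℕ) ≤ j ∧ j < mlBeta d (k : ℕ) + d k)
    (h' : mlBeta d (k' : ℕ) ≤ j ∧ j < mlBeta d (k' : ℕ) + d k') : k = k' := by
  rcases lt_trichotomy (k : ℕ) (k' : ℕ) with hlt | heq | hlt
  · exfalso
    have h1 : mlBeta d ((k : ℕ) + 1) ≤ mlBeta d (k' : ℕ) := mlBeta_mono d (by omega)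
    rw [mlBeta_succ] at h1
    omega
  · exact Fin.ext heq
  · exfalso
    have h1 : mlBeta d ((k' : ℕ) + 1) ≤ mlBeta d (k : ℕ) := mlBeta_mono d (by omega)
    rw [mlBeta_succ] at h1
    omega

noncomputable def mlConc {V : Type*} [Zero V] {p n : ℕ} (d : Fin p → ℕ)
    (c : ∀ k : Fin p, Fin (d k) → V) (j : Fin n) : V :=
  if h : ∃ k : Fin p, mlBeta d (k : ℕ) ≤ (j : ℕ) ∧ (j : ℕ) < mlBeta d (k : ℕ) + d k then
    c h.choose ⟨(j : ℕ) - mlBeta d (h.choose : ℕ), by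
      have := h.choose_spec; omega⟩
  else 0

lemma mlConc_block {V : Type*} [Zero V] {p n : ℕ} (d : Fin p → ℕ)
    (c : ∀ k : Fin p, Fin (d k) → V) (k : Fin p) (i : Fin (d k)) (j : Fin n)
    (hj : (j : ℕ) = mlBeta d (k : ℕ) + (i : ℕ)) : mlConc d c j = c k i := by
  have h : ∃ k : Fin p, mlBeta d (k : ℕ) ≤ (j : ℕ) ∧ (j : ℕ) < mlBeta d (k : ℕ) + d k :=
    ⟨k, by omega, by have := i.2; omega⟩
  rw [mlConc, dif_pos h]
  have hk : h.choose = k := mlK_unique d (j : ℕ) h.choose k h.choose_spec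
    ⟨by omega, by have := i.2; omega⟩
  cases hk
  apply congrArg (c h.choose)
  apply Fin.ext
  simp only [Fin.val_mk]
  omega

/-- Weak LYM inequality for the projective Meshalkin theorem: under the hypotheses of
that theorem, `∑_{a ∈ M} 1/[n; r(a)]_q` is at most the sum of the `l^(p-1)` largest
expressions `q^(s_2(α))` over nonnegative integer sequences `α` summing to `n`. -/
theorem meshalkin_projective_weak_lym (q n l p : ℕ) (hl : 1 ≤ l) (hp : 2 ≤ p)
    (F : Type*) [Field F] [Fintype F] (hq : Fintype.card F = q)
    (V : Type*) [AddCommGroup V] [Module F V] [FiniteDimensional F V]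
    (hn : Module.finrank F V = n)
    (M : Finset (Fin p → Submodule F V))
    (hmesh : ∀ a ∈ M, (⨆ i, a i) = ⊤ ∧ ∑ i, Module.finrank F (a i) = n)
    (hcf : ∀ k : Fin p, (k : ℕ) + 1 < p →
      ChainFree l {b : Submodule F V | ∃ a ∈ M, a k = b}) :
    ∃ T : Finset (Fin p → ℕ), (∀ α ∈ T, ∑ i, α i = n) ∧ T.card ≤ l ^ (p - 1) ∧
      ∑ a ∈ M, 1 / gaussMultinomial q n (fun i => Module.finrank F (a i)) ≤
        ∑ α ∈ T, (q : ℚ) ^ (s2 α) := by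
  classical
  subst hq hn
  have hq2 : 2 ≤ Fintype.card F := Fintype.one_lt_card
  have : Finite V := Module.finite_of_finite F
  letI : Fintype V := Fintype.ofFinite V
  set q := Fintype.card F with hqdef
  set n := Module.finrank F V with hndef
  set D : (Fin p → Submodule F V) → (Fin p → ℕ) :=
    fun a k => Module.finrank F (a k) with hD
  set Adapted : (Fin p → Submodule F V) → (Fin n → V) → Prop := fun a b =>
    ∀ k : Fin p, a k = Submodule.span F
      (b '' {j : Fin n | mlBeta (D a) (k : ℕ) ≤ (j : ℕ) ∧
        (j : ℕ) < mlBeta (D a) (k : ℕ) + D a k}) with hAdapted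
  -- basic facts
  have hsum : ∀ a ∈ M, ∑ k, D a k = n := fun a ha => (hmesh a ha).2
  have hsup : ∀ a ∈ M, (⨆ i, a i) = ⊤ := fun a ha => (hmesh a ha).1
  -- (1) number of independent tuples
  have count1 : ∀ (W : Submodule F V),
      Nat.card {s : Fin (Module.finrank F W) → W // LinearIndependent F s} =
        mlN q (Module.finrank F W) :=
    fun W => by
      unfold mlN
      rw [← Fin.prod_univ_eq_prod_range]
      exact card_linearIndependent le_rfl
  -- (2) lower bound on adapted tuples
  have lower : ∀ a ∈ M, ∏ k, mlN q (D a k) ≤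
      (Finset.univ.filter (fun b : Fin n → V => Adapted a b)).card := by
    intro a ha
    have hβtop : mlBeta (D a) p = n := by rw [mlBeta_top]; exact hsum a ha
    have hcardBt : Nat.card (∀ k : Fin p, {s : Fin (D a k) → (a k) // LinearIndependent F s})
        = ∏ k, mlN q (D a k) := by
      rw [Nat.card_pi]
      exact Finset.prod_congr rfl (fun k _ => count1 (a k))
    set Φ : (∀ k : Fin p, {s : Fin (D a k) → (a k) // LinearIndependent F s}) → (Fin n → V) :=
      fun c => mlConc (D a) (fun k i => ((c k).1 i : V)) with hΦ
    have hblock : ∀ c (k : Fin p) (i : Fin (D a k)) (j : Fin n),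
        (j : ℕ) = mlBeta (D a) (k : ℕ) + (i : ℕ) → Φ c j = ((c k).1 i : V) := by
      intro c k i j hj
      exact mlConc_block _ _ k i j hj
    have hjn : ∀ (k : Fin p) (i : Fin (D a k)), mlBeta (D a) (k : ℕ) + (i : ℕ) < n := by
      intro k i
      have h1 : mlBeta (D a) (k : ℕ) + (i : ℕ) < mlBeta (D a) ((k : ℕ) + 1) := by
        rw [mlBeta_succ]; have := i.2; omega
      have h2 : mlBeta (D a) ((k : ℕ) + 1) ≤ mlBeta (D a) p := mlBeta_mono _ (by omega)
      omega
    have himage : ∀ c (k : Fin p),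
        Φ c '' {j : Fin n | mlBeta (D a) (k : ℕ) ≤ (j : ℕ) ∧
            (j : ℕ) < mlBeta (D a) (k : ℕ) + D a k}
          = Set.range (fun i : Fin (D a k) => ((c k).1 i : V)) := by
      intro c k
      ext x
      constructor
      · rintro ⟨j, hj, rfl⟩
        simp only [Set.mem_setOf_eq] at hj
        refine ⟨⟨(j : ℕ) - mlBeta (D a) (k : ℕ), by omega⟩, ?_⟩
        exact (hblock c k _ j (by simp only [Fin.val_mk]; omega)).symm
      · rintro ⟨i, rfl⟩
        refine ⟨⟨mlBeta (D a) (k : ℕ) + (i : ℕ), hjn k i⟩,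
          ⟨by simp only [Set.mem_setOf_eq, Fin.val_mk]; omega,
           by simp only [Set.mem_setOf_eq, Fin.val_mk]; have := i.2; omega⟩, ?_⟩
        exact hblock c k i _ rfl
      -- membership set condition
    have hAd : ∀ c, Adapted a (Φ c) := by
      intro c k
      rw [himage c k]
      have hspan : Submodule.span F (Set.range ((c k).1)) = ⊤ :=
        (c k).2.span_eq_top_of_card_eq_finrank' (by simp [hD])
      have hcomp : (fun i : Fin (D a k) => ((c k).1 i : V)) = ((a k).subtype) ∘ ((c k).1) := rfl
      rw [hcomp, Set.range_comp, Submodule.span_image, hspan, Submodule.map_top,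
        Submodule.range_subtype]
    have hΦinj : Function.Injective Φ := by
      intro c c' hcc
      funext k
      apply Subtype.ext
      funext i
      have h1 := congrFun hcc ⟨mlBeta (D a) (k : ℕ) + (i : ℕ), hjn k i⟩
      rw [hblock c k i _ rfl, hblock c' k i _ rfl] at h1
      exact Subtype.coe_injective h1
    calc ∏ k, mlN q (D a k)
        = Nat.card (∀ k : Fin p, {s : Fin (D a k) → (a k) // LinearIndependent F s}) :=
          hcardBt.symm
      _ ≤ Nat.card {b : Fin n → V //
            b ∈ Finset.univ.filter (fun b : Fin n → V => Adapted a b)} := by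
          apply Nat.card_le_card_of_injective
            (fun c => ⟨Φ c, Finset.mem_filter.mpr ⟨Finset.mem_univ _, hAd c⟩⟩)
          intro c c' h
          exact hΦinj (congrArg Subtype.val h)
      _ = (Finset.univ.filter (fun b : Fin n → V => Adapted a b)).card :=
          Nat.card_eq_finsetCard _
  -- (3) adapted tuples are independent
  have indep : ∀ a ∈ M, ∀ b : Fin n → V, Adapted a b → LinearIndependent F b := by
    intro a ha b hAb
    have hspan : ⊤ ≤ Submodule.span F (Set.range b) := by
      rw [← hsup a ha]
      apply iSup_le
      intro k
      rw [hAb k]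
      exact Submodule.span_mono (Set.image_subset_range b _)
    exact linearIndependent_of_top_le_span_of_card_eq_finrank hspan (by simp [hndef])
  -- (4) per-tuple upper bound
  have upper : ∀ b : Fin n → V, (M.filter (fun a => Adapted a b)).card ≤ l ^ (p - 1) := by
    intro b
    by_cases hne : (M.filter (fun a => Adapted a b)).Nonempty
    swap
    · rw [Finset.not_nonempty_iff_eq_empty] at hne
      rw [hne, Finset.card_empty]
      exact Nat.zero_le _
    obtain ⟨a0, ha0⟩ := hne
    rw [Finset.mem_filter] at ha0
    have hb : LinearIndependent F b := indep a0 ha0.1 b ha0.2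
    set fmap : (Fin p → Submodule F V) → (Fin (p-1) → ℕ) :=
      fun a k => mlBeta (D a) ((k : ℕ) + 1) with hfmap
    have hrecover : ∀ a ∈ M, ∀ a' ∈ M, Adapted a b → Adapted a' b →
        fmap a = fmap a' → a = a' := by
      intro a ha a' ha' hAa hAa' hff
      have hβe : ∀ t : ℕ, t ≤ p → mlBeta (D a) t = mlBeta (D a') t := by
        intro t ht
        rcases Nat.eq_zero_or_pos t with rfl | ht0
        · rw [mlBeta_zero, mlBeta_zero]
        rcases eq_or_lt_of_le ht with rfl | htp
        · rw [mlBeta_top, mlBeta_top, hsum a ha, hsum a' ha']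
        · have h1 := congrFun hff ⟨t - 1, by omega⟩
          simpa only [hfmap, Fin.val_mk, show t - 1 + 1 = t by omega] using h1
      have hDa : D a = D a' := by
        funext k
        have h1 := hβe (k : ℕ) (by omega)
        have h2 := hβe ((k : ℕ) + 1) (by have := k.2; omega)
        rw [mlBeta_succ, mlBeta_succ] at h2
        omega
      funext k
      rw [hAa k, hAa' k, hDa]
    have hcardeq : (M.filter (fun a => Adapted a b)).card
        = ((M.filter (fun a => Adapted a b)).image fmap).card := by
      rw [Finset.card_image_of_injOn]
      intro a ha a' ha' h
      simp only [Finset.coe_filter, Set.mem_setOf_eq] at ha ha'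
      exact hrecover a ha.1 a' ha'.1 ha.2 ha'.2 h
    rw [hcardeq]
    apply ml_branch l (p-1)
    intro k f hf
    obtain ⟨a1, ha1, hfa1⟩ := Finset.mem_image.mp hf
    rw [Finset.mem_filter] at ha1
    set S := (M.filter (fun a => Adapted a b)).image fmap with hSdef
    set β0 := mlBeta (D a1) (k : ℕ) with hβ0
    have hk'lt : (k : ℕ) < p := by have := k.2; omega
    set k' : Fin p := ⟨(k : ℕ), hk'lt⟩ with hk'
    set T := ((S.filter (fun g => ∀ j : Fin (p-1), (j : ℕ) < (k : ℕ) → g j = f j)).image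
      (fun g => g k)) with hT
    set φ : ℕ → Submodule F V := fun t =>
      Submodule.span F (b '' {j : Fin n | β0 ≤ (j : ℕ) ∧ (j : ℕ) < t}) with hφdef
    have hTfact : ∀ t ∈ T, β0 ≤ t ∧ t ≤ n ∧ ∃ a ∈ M, a k' = φ t := by
      intro t ht
      rw [hT, Finset.mem_image] at ht
      obtain ⟨g, hg, hgt⟩ := ht
      rw [Finset.mem_filter] at hg
      obtain ⟨hgS, hgpre⟩ := hg
      rw [hSdef, Finset.mem_image] at hgS
      obtain ⟨a, haM, hga⟩ := hgS
      rw [Finset.mem_filter] at haM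
      have hβa : mlBeta (D a) (k : ℕ) = β0 := by
        rcases Nat.eq_zero_or_pos (k : ℕ) with hk0 | hk0
        · rw [hβ0, hk0, mlBeta_zero, mlBeta_zero]
        · have h1 := hgpre ⟨(k : ℕ) - 1, by omega⟩ (by simp only [Fin.val_mk]; omega)
          rw [← hga, ← hfa1] at h1
          simp only [hfmap, Fin.val_mk, show (k : ℕ) - 1 + 1 = (k : ℕ) by omega] at h1
          exact h1
      have hgk : g k = mlBeta (D a) ((k : ℕ) + 1) := by rw [← hga]
      have hsucc := mlBeta_succ (D a) k'
      simp only [hk', Fin.val_mk] at hsucc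
      have htval : t = mlBeta (D a) (k : ℕ) + D a k' := by
        simp only [hk', Fin.val_mk]
        omega
      have htn : t ≤ n := by
        rw [← hgt, hgk, ← hsum a haM.1, ← mlBeta_top (D a)]
        exact mlBeta_mono (D a) (by omega)
      refine ⟨by omega, htn, a, haM.1, ?_⟩
      have hblk := haM.2 k'
      rw [hblk, hφdef]
      congr 1
      ext j
      simp only [hk', Fin.val_mk] at htval ⊢
      rw [hβa] at htval ⊢
      rw [← htval]
    apply ml_chain_bound (hcf k' (by simp only [hk', Fin.val_mk]; have := k.2; omega)) T φ
    · intro s hs t ht hst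
      have hsf := hTfact s hs
      have htf := hTfact t ht
      have hlt : s < n := by omega
      have hmem1 : b ⟨s, hlt⟩ ∈ φ t := by
        apply Submodule.subset_span
        exact ⟨⟨s, hlt⟩, ⟨by simp only [Fin.val_mk]; omega, by simp only [Fin.val_mk]; omega⟩, rfl⟩
      have hmem2 : b ⟨s, hlt⟩ ∉ φ s := by
        apply hb.notMem_span_image
        simp only [Set.mem_setOf_eq, Fin.val_mk]
        omega
      have hle : φ s ≤ φ t := by
        apply Submodule.span_mono
        apply Set.image_mono
        intro j hj
        simp only [Set.mem_setOf_eq] at hj ⊢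
        omega
      exact lt_of_le_of_ne hle (fun h => hmem2 (h ▸ hmem1))
    · intro t ht
      obtain ⟨_, _, a, haM, hak⟩ := hTfact t ht
      exact ⟨a, haM, hak⟩
  -- (5) per-tuple per-profile upper bound
  have upper1 : ∀ (b : Fin n → V) (δ : Fin p → ℕ),
      (M.filter (fun a => Adapted a b ∧ D a = δ)).card ≤ 1 := by
    intro b δ
    apply Finset.card_le_one.mpr
    intro a ha a' ha'
    rw [Finset.mem_filter] at ha ha'
    funext k
    have e1 := ha.2.1 k
    have e2 := ha'.2.1 k
    rw [ha.2.2] at e1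
    rw [ha'.2.2] at e2
    exact e1.trans e2.symm
  -- cardinality of independent families in V
  have countV : (Finset.univ.filter (fun b : Fin n → V => LinearIndependent F b)).card
      = mlN q n := by
    rw [← Fintype.card_subtype, Fintype.card_eq_nat_card]
    unfold mlN
    rw [← Fin.prod_univ_eq_prod_range]
    exact card_linearIndependent le_rfl
  -- double counting, global version
  have P1 : ∑ a ∈ M, ∏ k, mlN q (D a k) ≤ mlN q n * l ^ (p - 1) := by
    have hzero : ∀ b : Fin n → V, ¬ LinearIndependent F b →
        (M.filter (fun a => Adapted a b)).card = 0 := by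
      intro b hbn
      rw [Finset.card_eq_zero, Finset.filter_eq_empty_iff]
      intro a ha hAa
      exact hbn (indep a ha b hAa)
    calc ∑ a ∈ M, ∏ k, mlN q (D a k)
        ≤ ∑ a ∈ M, (Finset.univ.filter (fun b : Fin n → V => Adapted a b)).card :=
          Finset.sum_le_sum (fun a ha => lower a ha)
      _ = ∑ b : Fin n → V, (M.filter (fun a => Adapted a b)).card := by
          simp only [Finset.card_filter]
          exact Finset.sum_comm
      _ = ∑ b ∈ Finset.univ.filter (fun b : Fin n → V => LinearIndependent F b),
            (M.filter (fun a => Adapted a b)).card := by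
          rw [← Finset.sum_filter_add_sum_filter_not Finset.univ
            (fun b : Fin n → V => LinearIndependent F b)]
          rw [Finset.sum_eq_zero (fun b hb => hzero b (Finset.mem_filter.mp hb).2), add_zero]
      _ ≤ ∑ _b ∈ Finset.univ.filter (fun b : Fin n → V => LinearIndependent F b), l ^ (p - 1) :=
          Finset.sum_le_sum (fun b _ => upper b)
      _ = mlN q n * l ^ (p - 1) := by
          rw [Finset.sum_const, smul_eq_mul, countV]
  -- double counting, per profile
  have P2 : ∀ δ : Fin p → ℕ, (M.filter (fun a => D a = δ)).card * ∏ k, mlN q (δ k)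
      ≤ mlN q n := by
    intro δ
    have hbb : ∀ b : Fin n → V,
        ((M.filter (fun a => D a = δ)).filter (fun a => Adapted a b)).card
          ≤ if LinearIndependent F b then 1 else 0 := by
      intro b
      have heq : (M.filter (fun a => D a = δ)).filter (fun a => Adapted a b)
          = M.filter (fun a => Adapted a b ∧ D a = δ) := by
        rw [Finset.filter_filter]
        apply Finset.filter_congr
        intro a _
        tauto
      rw [heq]
      by_cases hbi : LinearIndependent F b
      · rw [if_pos hbi]
        exact upper1 b δ
      · rw [if_neg hbi, Nat.le_zero, Finset.card_eq_zero, Finset.filter_eq_empty_iff]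
        rintro a ha ⟨hAa, _⟩
        exact hbi (indep a ha b hAa)
    calc (M.filter (fun a => D a = δ)).card * ∏ k, mlN q (δ k)
        = ∑ a ∈ M.filter (fun a => D a = δ), ∏ k, mlN q (D a k) := by
          rw [Finset.sum_congr rfl (fun a ha => by
            rw [(Finset.mem_filter.mp ha).2]), Finset.sum_const, smul_eq_mul]
      _ ≤ ∑ a ∈ M.filter (fun a => D a = δ),
            (Finset.univ.filter (fun b : Fin n → V => Adapted a b)).card :=
          Finset.sum_le_sum (fun a ha => lower a (Finset.mem_filter.mp ha).1)
      _ = ∑ b : Fin n → V,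
            ((M.filter (fun a => D a = δ)).filter (fun a => Adapted a b)).card := by
          simp only [Finset.card_filter]
          exact Finset.sum_comm
      _ ≤ ∑ b : Fin n → V, (if LinearIndependent F b then 1 else 0) :=
          Finset.sum_le_sum (fun b _ => hbb b)
      _ = mlN q n := by
          rw [← Finset.card_filter, countV]
  -- pass to rationals
  have hNpos : (0:ℚ) < (mlN q n : ℚ) := by exact_mod_cast mlN_pos q n hq2
  set P : Finset (Fin p → ℕ) := M.image D with hP
  set c : (Fin p → ℕ) → ℚ := fun δ =>
    (((M.filter (fun a => D a = δ)).card : ℚ) * ∏ k, (mlN q (δ k) : ℚ)) / (mlN q n : ℚ)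
    with hc
  set v : (Fin p → ℕ) → ℚ := fun δ => (q : ℚ) ^ (s2 δ) with hv
  have hgroup : ∀ g : (Fin p → ℕ) → ℚ,
      ∑ a ∈ M, g (D a) = ∑ δ ∈ P, ((M.filter (fun a => D a = δ)).card : ℚ) * g δ := by
    intro g
    rw [← Finset.sum_fiberwise_of_maps_to (fun a ha => Finset.mem_image_of_mem D ha)
      (fun a => g (D a))]
    apply Finset.sum_congr rfl
    intro δ _
    rw [Finset.sum_congr rfl (fun a ha => by rw [(Finset.mem_filter.mp ha).2]),
      Finset.sum_const, nsmul_eq_mul]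
  have hc0 : ∀ δ ∈ P, 0 ≤ c δ := by
    intro δ _
    apply div_nonneg _ hNpos.le
    apply mul_nonneg (Nat.cast_nonneg _)
    exact Finset.prod_nonneg (fun k _ => Nat.cast_nonneg _)
  have hc1 : ∀ δ ∈ P, c δ ≤ 1 := by
    intro δ _
    rw [hc, div_le_one hNpos]
    have := P2 δ
    push_cast
    exact_mod_cast this
  have hv0 : ∀ δ ∈ P, 0 ≤ v δ := fun δ _ => pow_nonneg (by positivity) _
  have hsle : ∑ δ ∈ P, c δ ≤ ((l ^ (p-1) : ℕ) : ℚ) := by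
    have h1 : ∑ δ ∈ P, c δ = (∑ a ∈ M, (∏ k, (mlN q (D a k) : ℚ))) / (mlN q n : ℚ) := by
      rw [Finset.sum_div]
      rw [hgroup (fun δ => (∏ k, (mlN q (δ k) : ℚ)) / (mlN q n : ℚ))]
      apply Finset.sum_congr rfl
      intro δ _
      rw [hc]
      field_simp
    rw [h1, div_le_iff₀ hNpos]
    have := P1
    push_cast
    rw [mul_comm ((l:ℚ) ^ (p-1)) _]
    exact_mod_cast this
  -- the key identity
  have hq0 : (q:ℚ) ≠ 0 := by
    have : (2:ℚ) ≤ (q:ℚ) := by exact_mod_cast hq2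
    linarith
  have hkey : ∀ δ : Fin p → ℕ, (∑ i, δ i) = n →
      1 / gaussMultinomial q n δ = ((∏ k, (mlN q (δ k) : ℚ)) / (mlN q n : ℚ)) * v δ := by
    intro δ hδ
    have hA : (0:ℚ) < ∏ k, (qFact q (δ k) : ℚ) :=
      Finset.prod_pos (fun k _ => by exact_mod_cast qFact_pos q (δ k) hq2)
    have hB : (0:ℚ) < (qFact q n : ℚ) := by exact_mod_cast qFact_pos q n hq2
    have h1 : (mlN q n : ℚ) = (q:ℚ)^(n.choose 2) * (qFact q n : ℚ) := by
      rw [mlN_eq q n (by omega)]; push_cast; ring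
    have h2 : (∏ k, (mlN q (δ k) : ℚ))
        = (q:ℚ)^(∑ k, (δ k).choose 2) * ∏ k, (qFact q (δ k) : ℚ) := by
      calc ∏ k, (mlN q (δ k) : ℚ)
          = ∏ k, ((q:ℚ)^((δ k).choose 2) * (qFact q (δ k) : ℚ)) :=
            Finset.prod_congr rfl (fun k _ => by rw [mlN_eq q (δ k) (by omega)]; push_cast; ring)
        _ = _ := by rw [Finset.prod_mul_distrib, Finset.prod_pow_eq_pow_sum]
    have h3 : n.choose 2 = (∑ k, (δ k).choose 2) + s2 δ := by rw [← hδ]; exact choose_sum_eq δ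
    rw [gaussMultinomial, one_div_div, h1, h2, h3, pow_add, hv]
    have hqs : (q:ℚ) ^ (s2 δ) ≠ 0 := pow_ne_zero _ hq0
    have hqc : (q:ℚ) ^ (∑ k, (δ k).choose 2) ≠ 0 := pow_ne_zero _ hq0
    field_simp
  have hLHS : ∑ a ∈ M, 1 / gaussMultinomial q n (fun i => Module.finrank F (a i))
      = ∑ δ ∈ P, c δ * v δ := by
    have hstep : ∑ a ∈ M, 1 / gaussMultinomial q n (fun i => Module.finrank F (a i))
        = ∑ a ∈ M, (fun δ => 1 / gaussMultinomial q n δ) (D a) :=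
      Finset.sum_congr rfl (fun a _ => rfl)
    rw [hstep, hgroup (fun δ => 1 / gaussMultinomial q n δ)]
    apply Finset.sum_congr rfl
    intro δ hδP
    obtain ⟨a, ha, rfl⟩ := Finset.mem_image.mp hδP
    rw [hkey (D a) (hsum a ha), hc]
    field_simp
  obtain ⟨T, hTP, hTcard, hTle⟩ := ml_select P c v (l ^ (p-1)) hc0 hc1 hv0 hsle
  refine ⟨T, ?_, hTcard, ?_⟩
  · intro α hα
    obtain ⟨a, ha, rfl⟩ := Finset.mem_image.mp (hTP hα)
    exact hsum a ha
  · rw [hLHS]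
    exact hTle.trans (le_of_eq (Finset.sum_congr rfl (fun δ _ => rfl)))
end
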